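/- Let E be a Δ-Σ-field of characteristic zero with derivations δ_1,…,δ_s, and let a_1,…,a_n ∈ E be such that the n×s Jacobian matrix J(a_1,…,a_n) (with (i,j)-entry δ_j a_i) has rank s. Extend all operators coefficientwise to E[[x_1,…,x_n]]. Then for every m ∈ ℤ_{≥0}, the power series δ^α(e^{a_1 x_1 + … + a_n x_n}) for α ∈ ℤ_{≥0}^s with |α| ≤ m, where e^{a_1x_1+…+a_nx_n} := Σ_{k ∈ ℤ_{≥0}^n} (a_1^{k_1}⋯a_n^{k_n}/(k_1!⋯k_n!)) x^k, are linearly independent over E. -/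

import Mathlib

/-- Iterated application of (extensions of) the derivations:
`δ^α = δ_1^{α_1} ∘ ⋯ ∘ δ_s^{α_s}`. -/
def dIter {A : Type*} {s : ℕ} (δ : Fin s → (A → A)) (α : Fin s → ℕ) (x : A) : A :=
  (List.finRange s).foldl (fun y i => (δ i)^[α i] y) x

/-- The coefficientwise extension of a map `d : E → E` to `E⟦x_1, …, x_n⟧`:
`φ(Σ c_k x^k) = Σ φ(c_k) x^k`. -/
noncomputable def coeffWiseMv {E : Type*} [Field E] {n : ℕ} (d : E → E)
    (f : MvPowerSeries (Fin n) E) : MvPowerSeries (Fin n) E :=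
  fun k => d (MvPowerSeries.coeff k f)

/-- The multivariate exponential power series
`e^{a_1 x_1 + ⋯ + a_n x_n} = Σ_k (a_1^{k_1} ⋯ a_n^{k_n} / (k_1! ⋯ k_n!)) x^k`
(for `E` of characteristic zero). -/
noncomputable def mvExp {E : Type*} [Field E] [CharZero E] {n : ℕ} (a : Fin n → E) :
    MvPowerSeries (Fin n) E :=
  fun k => (∏ i, a i ^ k i) / ∏ i, ((k i).factorial : E)

/-!
Each `δ_j` acts on `E⟦x⟧` as a derivation with `δ_j e^{a·x} = ℓ_j e^{a·x}`, where
`ℓ_j = ∑_i δ_j(a_i) x_i`. Hence `δ^α e^{a·x} = Q_α e^{a·x}` for a polynomial `Q_α` of total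
degree at most `|α|` whose homogeneous component of degree `|α|` is `∏_j ℓ_j^{α_j}`. The rank
condition says that the linear forms `ℓ_j` are linearly independent, hence algebraically
independent, so these top components are linearly independent. Comparing top components then
shows that the `Q_α` are linearly independent, and multiplying by the unit `e^{a·x}` preserves
this.
-/

open MvPolynomial

theorem Derivation.leibniz_prod {R A M ι : Type*} [CommSemiring R] [CommSemiring A]
    [AddCommMonoid M] [Algebra R A] [Module A M] [Module R M] [DecidableEq ι]
    (D : Derivation R A M) (s : Finset ι) (f : ι → A) :
    D (∏ i ∈ s, f i) = ∑ i ∈ s, (∏ j ∈ s.erase i, f j) • D (f i) := by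
  induction s using Finset.induction_on with
  | empty => simp
  | insert a s ha ih =>
    rw [Finset.prod_insert ha, D.leibniz, ih, Finset.sum_insert ha, Finset.erase_insert ha,
      Finset.smul_sum, add_comm]
    congr 1
    refine Finset.sum_congr rfl fun i hi => ?_
    rw [Finset.erase_insert_of_ne (ne_of_mem_of_not_mem hi ha).symm,
      Finset.prod_insert fun h => ha (Finset.mem_of_mem_erase h), mul_smul]

section

variable {K : Type*} [Field K]

theorem Derivation.map_pow_div_factorial_succ [CharZero K] (D : Derivation ℤ K K) (x : K)
    (j : ℕ) : D (x ^ (j + 1) / (j + 1).factorial) = x ^ j / j.factorial * D x := by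
  rw [D.leibniz_div_const _ _ (D.map_natCast _), D.leibniz_pow, Nat.factorial_succ]
  simp only [smul_eq_mul, nsmul_eq_mul, Nat.add_sub_cancel]
  push_cast
  field_simp

noncomputable def linearForm {σ : Type*} [Fintype σ] (b : σ → K) : MvPolynomial σ K :=
  ∑ i, monomial (Finsupp.single i 1) (b i)

theorem isHomogeneous_linearForm {σ : Type*} [Fintype σ] (b : σ → K) :
    (linearForm b).IsHomogeneous 1 :=
  IsHomogeneous.sum _ _ _ fun i _ => isHomogeneous_monomial _ (by simp)

theorem linearForm_eq_sum_smul_X {σ : Type*} [Fintype σ] (b : σ → K) :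
    linearForm b = ∑ i, b i • X i := by
  simp [linearForm, smul_eq_C_mul, C_mul_X_eq_monomial]

theorem aeval_linearForm {σ ι : Type*} [Fintype σ] [Fintype ι] (w : σ → ι → K) (b : σ → K) :
    aeval (fun i => linearForm (w i)) (linearForm b) = linearForm (∑ i, b i • w i) := by
  simp only [linearForm_eq_sum_smul_X, map_sum, map_smul, aeval_X, Finset.smul_sum,
    smul_smul, Finset.sum_apply, Pi.smul_apply, smul_eq_mul, Finset.sum_smul]
  exact Finset.sum_comm

theorem linearForm_single {σ : Type*} [Fintype σ] [DecidableEq σ] (i : σ) :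
    linearForm (Pi.single i (1 : K)) = X i := by
  simp [linearForm_eq_sum_smul_X, Pi.single_apply]

theorem algebraicIndependent_linearForm {σ ι : Type*} [Fintype σ] [Fintype ι]
    {v : ι → σ → K} (hv : LinearIndependent K v) :
    AlgebraicIndependent K fun j => linearForm (v j) := by
  classical
  obtain ⟨g, hg⟩ := LinearMap.exists_leftInverse_of_injective (Fintype.linearCombination K v)
    (LinearMap.ker_eq_bot.mpr (linearIndependent_iff_injective_fintypeLinearCombination.mp hv))
  -- the substitution `X i ↦ linearForm (g (Pi.single i 1))` sends `linearForm (v j)` to `X j`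
  refine AlgebraicIndependent.of_comp (aeval fun i => linearForm (g (Pi.single i 1))) ?_
  convert algebraicIndependent_X ι K using 1
  funext j
  have hgv : g (v j) = Pi.single j 1 := by
    simpa using LinearMap.congr_fun hg (Pi.single j 1)
  rw [Function.comp_apply, aeval_linearForm, ← linearForm_single, ← hgv]
  congr 1
  simp_rw [← map_smul, ← map_sum]
  congr 1
  simpa using (Pi.basisFun K σ).sum_repr (v j)

theorem AlgebraicIndependent.linearIndependent_prod_pow {ι A : Type*} [Fintype ι] [CommRing A]
    [Algebra K A] {x : ι → A} (hx : AlgebraicIndependent K x) :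
    LinearIndependent K fun α : ι → ℕ => ∏ i, x i ^ α i := by
  have hmono := ((basisMonomials ι K).linearIndependent.map' (aeval x).toLinearMap
    (LinearMap.ker_eq_bot.mpr hx)).comp _ Finsupp.equivFunOnFinite.symm.injective
  simpa [Function.comp_def, coe_basisMonomials, aeval_monomial, Finsupp.prod_pow] using hmono

theorem Matrix.linearIndependent_col_of_rank_eq {m ι : Type*} [Fintype ι] (A : Matrix m ι K)
    (h : A.rank = Fintype.card ι) : LinearIndependent K A.col := by
  rw [linearIndependent_iff_card_eq_finrank_span, ← h, Matrix.rank_eq_finrank_span_cols]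
  rfl

theorem homogeneousComponent_mul_of_isHomogeneous {σ : Type*} {p : MvPolynomial σ K} {d : ℕ}
    (hp : p.IsHomogeneous d) (q : MvPolynomial σ K) (N : ℕ) :
    homogeneousComponent (d + N) (p * q) = p * homogeneousComponent N q := by
  classical
  conv_lhs => rw [← sum_homogeneousComponent q, Finset.mul_sum, map_sum]
  have hcomp : ∀ i, homogeneousComponent (d + N) (p * homogeneousComponent i q) =
      if N = i then p * homogeneousComponent i q else 0 := fun i => by
    rw [homogeneousComponent_of_mem ((mem_homogeneousSubmodule _ _).mpr
      (hp.mul (homogeneousComponent_isHomogeneous i q)))]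
    simp only [add_right_inj]
  simp only [hcomp, Finset.sum_ite_eq, Finset.mem_range]
  split_ifs with hN
  · rfl
  · rw [homogeneousComponent_eq_zero _ _ (by omega), mul_zero]

theorem linearIndependent_of_homogeneousComponent {σ ι : Type*} {Q M : ι → MvPolynomial σ K}
    (w : ι → ℕ) (hdeg : ∀ i, (Q i).totalDegree ≤ w i)
    (hlead : ∀ i, homogeneousComponent (w i) (Q i) = M i) (hM : LinearIndependent K M) :
    LinearIndependent K Q := by
  classical
  refine linearIndependent_iff'.mpr fun s g hg => ?_
  by_contra! hne
  set t := s.filter (g · ≠ 0)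
  have ht : t.Nonempty := by
    obtain ⟨i, hi, hgi⟩ := hne
    exact ⟨i, Finset.mem_filter.mpr ⟨hi, hgi⟩⟩
  obtain ⟨i₀, hi₀, hw⟩ := Finset.exists_mem_eq_sup t ht w
  set N := t.sup w
  -- in degree `N`, the top weight among nonzero coefficients, only the leading forms survive
  have hcomp : ∀ i ∈ s, g i • homogeneousComponent N (Q i) =
      if w i = N then g i • M i else 0 := by
    intro i hi
    by_cases hgi : g i = 0
    · simp [hgi]
    have hle : w i ≤ N := Finset.le_sup (Finset.mem_filter.mpr ⟨hi, hgi⟩)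
    split_ifs with hwi
    · rw [← hwi, hlead]
    · rw [homogeneousComponent_eq_zero _ _ ((hdeg i).trans_lt (lt_of_le_of_ne hle hwi)),
        smul_zero]
  have hsum : ∑ i ∈ s.filter (w · = N), g i • M i = 0 := by
    rw [Finset.sum_filter, ← Finset.sum_congr rfl hcomp]
    simpa only [map_sum, map_smul, map_zero] using congrArg (homogeneousComponent N) hg
  obtain ⟨hi₀s, hgi₀⟩ := Finset.mem_filter.mp hi₀
  exact hgi₀ (linearIndependent_iff'.mp hM _ _ hsum i₀ (Finset.mem_filter.mpr ⟨hi₀s, hw.symm⟩))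

theorem LinearIndependent.coe_mul_of_isUnit {σ ι : Type*} {Q : ι → MvPolynomial σ K}
    (hQ : LinearIndependent K Q) {u : MvPowerSeries σ K} (hu : IsUnit u) :
    LinearIndependent K fun i => (Q i : MvPowerSeries σ K) * u := by
  let φ := LinearMap.mulRight K u ∘ₗ (coeToMvPowerSeries.algHom K).toLinearMap
  have hφ : ∀ q, φ q = (q : MvPowerSeries σ K) * u := fun q => by
    simp [φ, coeToMvPowerSeries.algHom_apply]
  have hinj : Function.Injective φ := fun p q h => by
    rw [hφ, hφ] at h
    exact coe_injective σ K (hu.mul_left_injective h)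
  simpa only [Function.comp_def, hφ] using hQ.map' φ (LinearMap.ker_eq_bot.mpr hinj)

theorem dIter_induction {A : Type*} {s : ℕ} (F : Fin s → A → A) (P : (Fin s → ℕ) → A → Prop)
    (hF : ∀ i β x, P β x → P (β + Pi.single i 1) (F i x)) (α : Fin s → ℕ) {β : Fin s → ℕ}
    {x : A} (hx : P β x) : P (β + α) (dIter F α x) := by
  have hiter : ∀ i c β x, P β x → P (β + Pi.single i c) ((F i)^[c] x) := by
    intro i c
    induction c with
    | zero => intro β x hx; simpa using hx
    | succ c ih =>
      intro β x hx
      rw [Function.iterate_succ_apply', Pi.single_add, ← add_assoc]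
      exact hF _ _ _ (ih β x hx)
  have hfold : ∀ (l : List (Fin s)) β x, P β x →
      P (β + (l.map fun i => Pi.single i (α i)).sum)
        (l.foldl (fun y i => (F i)^[α i] y) x) := by
    intro l
    induction l with
    | nil => intro β x hx; simpa using hx
    | cons i l ih =>
      intro β x hx
      rw [List.foldl_cons, List.map_cons, List.sum_cons, ← add_assoc]
      exact ih _ _ (hiter i (α i) β x hx)
  unfold dIter
  simpa [← Fin.sum_univ_def, Finset.univ_sum_single] using hfold (List.finRange s) β x hx

section PowerSeries

variable {n : ℕ}

theorem coeff_coeffWiseMv (d : K → K) (f : MvPowerSeries (Fin n) K) (k : Fin n →₀ ℕ) :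
    MvPowerSeries.coeff k (coeffWiseMv d f) = d (MvPowerSeries.coeff k f) :=
  rfl

theorem coeffWiseMv_mul (D : Derivation ℤ K K) (f g : MvPowerSeries (Fin n) K) :
    coeffWiseMv D (f * g) = coeffWiseMv D f * g + f * coeffWiseMv D g := by
  ext k
  simp only [map_add, coeff_coeffWiseMv, MvPowerSeries.coeff_mul, map_sum,
    ← Finset.sum_add_distrib]
  refine Finset.sum_congr rfl fun p _ => ?_
  rw [D.leibniz, smul_eq_mul, smul_eq_mul]
  ring

theorem exists_coeffWiseMv_coe_eq {d : K → K} (hd : d 0 = 0) (q : MvPolynomial (Fin n) K) :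
    ∃ p : MvPolynomial (Fin n) K,
      coeffWiseMv d (q : MvPowerSeries (Fin n) K) = p ∧ p.totalDegree ≤ q.totalDegree := by
  let p : MvPolynomial (Fin n) K :=
    AddMonoidAlgebra.ofCoeff ((AddMonoidAlgebra.coeff q).mapRange d hd)
  have hp : ∀ k, coeff k p = d (coeff k q) := fun k => Finsupp.mapRange_apply (hf := hd)
  refine ⟨p, MvPowerSeries.ext fun k => by simp [coeff_coeffWiseMv, hp], ?_⟩
  refine totalDegree_le_of_support_subset fun k hk => ?_
  rw [mem_support_iff] at hk ⊢
  exact fun hq => hk (by rw [hp, hq, hd])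

variable [CharZero K]

theorem coeff_mvExp (a : Fin n → K) (k : Fin n →₀ ℕ) :
    MvPowerSeries.coeff k (mvExp a) = ∏ i, a i ^ k i / (k i).factorial :=
  (Finset.prod_div_distrib ..).symm

theorem isUnit_mvExp (a : Fin n → K) : IsUnit (mvExp a) := by
  rw [MvPowerSeries.isUnit_iff_constantCoeff, ← MvPowerSeries.coeff_zero_eq_constantCoeff_apply,
    coeff_mvExp]
  simp

theorem coeffWiseMv_mvExp (D : Derivation ℤ K K) (a : Fin n → K) :
    coeffWiseMv D (mvExp a) = ↑(linearForm fun i => D (a i)) * mvExp a := by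
  classical
  ext k
  rw [coeff_coeffWiseMv, coeff_mvExp, D.leibniz_prod, linearForm,
    ← coeToMvPowerSeries.ringHom_apply, map_sum, Finset.sum_mul, map_sum]
  refine Finset.sum_congr rfl fun i _ => ?_
  rw [coeToMvPowerSeries.ringHom_apply, coe_monomial, MvPowerSeries.coeff_monomial_mul,
    smul_eq_mul]
  split_ifs with hk
  · obtain ⟨k', rfl⟩ := exists_add_of_le hk
    rw [add_tsub_cancel_left, coeff_mvExp, ← Finset.mul_prod_erase _ _ (Finset.mem_univ i)]
    have hki : (Finsupp.single i 1 + k' : Fin n →₀ ℕ) i = k' i + 1 := by simp [add_comm]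
    have herase : ∏ l ∈ Finset.univ.erase i,
        a l ^ (Finsupp.single i 1 + k' : Fin n →₀ ℕ) l /
          ((Finsupp.single i 1 + k' : Fin n →₀ ℕ) l).factorial =
        ∏ l ∈ Finset.univ.erase i, a l ^ k' l / (k' l).factorial :=
      Finset.prod_congr rfl fun l hl => by
        simp [Finsupp.single_eq_of_ne (Finset.ne_of_mem_erase hl)]
    rw [hki, herase, D.map_pow_div_factorial_succ]
    ring
  · have hki : k i = 0 := by simpa [Finsupp.single_le_iff] using hk
    simp [hki]

def IsPolyMulMvExp (a : Fin n → K) (N : ℕ) (L : MvPolynomial (Fin n) K)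
    (f : MvPowerSeries (Fin n) K) : Prop :=
  ∃ q : MvPolynomial (Fin n) K,
    f = q * mvExp a ∧ q.totalDegree ≤ N ∧ homogeneousComponent N q = L

theorem IsPolyMulMvExp.coeffWiseMv {a : Fin n → K} {N : ℕ} {L : MvPolynomial (Fin n) K}
    {f : MvPowerSeries (Fin n) K} (D : Derivation ℤ K K) (h : IsPolyMulMvExp a N L f) :
    IsPolyMulMvExp a (N + 1) (linearForm (fun i => D (a i)) * L) (coeffWiseMv D f) := by
  obtain ⟨q, rfl, hdeg, hL⟩ := h
  obtain ⟨p, hp, hpdeg⟩ := exists_coeffWiseMv_coe_eq D.map_zero q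
  have hℓ := isHomogeneous_linearForm fun i => D (a i)
  refine ⟨p + linearForm (fun i => D (a i)) * q, ?_, ?_, ?_⟩
  · rw [coeffWiseMv_mul, hp, coeffWiseMv_mvExp, coe_add, coe_mul]
    ring
  · refine (totalDegree_add _ _).trans (max_le (by omega) ((totalDegree_mul _ _).trans ?_))
    have := hℓ.totalDegree_le
    omega
  · rw [map_add, homogeneousComponent_eq_zero _ p (by omega), zero_add, add_comm N 1,
      homogeneousComponent_mul_of_isHomogeneous hℓ, hL]

theorem isPolyMulMvExp_dIter {s : ℕ} (D : Fin s → Derivation ℤ K K) (a : Fin n → K)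
    (α : Fin s → ℕ) :
    IsPolyMulMvExp a (∑ j, α j) (∏ j, linearForm (fun i => D j (a i)) ^ α j)
      (dIter (fun j => coeffWiseMv (D j)) α (mvExp a)) := by
  have base : IsPolyMulMvExp a (∑ j, (0 : Fin s → ℕ) j)
      (∏ j, linearForm (fun i => D j (a i)) ^ (0 : Fin s → ℕ) j) (mvExp a) :=
    ⟨1, by simp, by simp, by simp⟩
  simpa using dIter_induction _ (fun β f => IsPolyMulMvExp a (∑ j, β j)
    (∏ j, linearForm (fun i => D j (a i)) ^ β j) f) (fun i β f hf => by
      convert hf.coeffWiseMv (D i) using 1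
      · simp [Finset.sum_add_distrib]
      · rw [mul_comm]
        simp only [Pi.add_apply, pow_add, Finset.prod_mul_distrib]
        congr 1
        exact (Fintype.prod_eq_single i fun j hj => by simp [hj]).trans (by simp)) α base

end PowerSeries

end

theorem derivatives_of_mvExp_linearIndependent_general
    {E : Type*} [Field E] [CharZero E]
    {s n : ℕ}
    (δ : Fin s → (E → E))
    (hadd : ∀ i, ∀ x y : E, δ i (x + y) = δ i x + δ i y)
    (hleib : ∀ i, ∀ x y : E, δ i (x * y) = δ i x * y + x * δ i y)
    (a : Fin n → E)
    (hrank : (Matrix.of fun (i : Fin n) (j : Fin s) => δ j (a i)).rank = s)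
    (m : ℕ) :
    LinearIndependent E
      (fun α : {α : Fin s → ℕ // (∑ i, α i) ≤ m} =>
        dIter (fun i => coeffWiseMv (δ i)) α.1 (mvExp a)) := by
  let D : Fin s → Derivation ℤ E E := fun j =>
    Derivation.mk' (AddMonoidHom.mk' (δ j) (hadd j)).toIntLinearMap fun x y => by
      simp [hleib]
      ring
  have hforms : AlgebraicIndependent E fun j => linearForm fun i => D j (a i) :=
    algebraicIndependent_linearForm
      (Matrix.linearIndependent_col_of_rank_eq (Matrix.of fun i j => δ j (a i))
        (by rw [hrank, Fintype.card_fin]))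
  choose Q hQ hdeg hlead using isPolyMulMvExp_dIter D a
  have hQ_li : LinearIndependent E Q :=
    linearIndependent_of_homogeneousComponent _ hdeg hlead hforms.linearIndependent_prod_pow
  have hall : LinearIndependent E fun α => dIter (fun i => coeffWiseMv (δ i)) α (mvExp a) := by
    convert hQ_li.coe_mul_of_isUnit (isUnit_mvExp a) using 2 with α
    exact hQ α
  exact hall.comp Subtype.val Subtype.val_injective

/-- Let `E` be a Δ-Σ-field of characteristic zero with derivations `δ_1, …, δ_s`, and
`a_1, …, a_n ∈ E` such that the `n × s` Jacobian matrix (with `(i,j)`-entry `δ_j a_i`)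
has rank `s`.  Extending the operators coefficientwise to `E⟦x_1, …, x_n⟧`, the power
series `δ^α(e^{a_1 x_1 + ⋯ + a_n x_n})` with `|α| ≤ m` are linearly independent
over `E`. -/
theorem derivatives_of_mvExp_linearIndependent
    {E : Type*} [Field E] [CharZero E]
    {s t n : ℕ}
    (δ : Fin s → (E → E)) (σ : Fin t → (E ≃+* E))
    (hadd : ∀ i, ∀ x y : E, δ i (x + y) = δ i x + δ i y)
    (hleib : ∀ i, ∀ x y : E, δ i (x * y) = δ i x * y + x * δ i y)
    (hδδ : ∀ i j, ∀ x : E, δ i (δ j x) = δ j (δ i x))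
    (hδσ : ∀ i j, ∀ x : E, δ i (σ j x) = σ j (δ i x))
    (hσσ : ∀ i j, ∀ x : E, σ i (σ j x) = σ j (σ i x))
    (a : Fin n → E)
    (hrank : (Matrix.of fun (i : Fin n) (j : Fin s) => δ j (a i)).rank = s)
    (m : ℕ) :
    LinearIndependent E
      (fun α : {α : Fin s → ℕ // (∑ i, α i) ≤ m} =>
        dIter (fun i => coeffWiseMv (δ i)) α.1 (mvExp a)) :=
  derivatives_of_mvExp_linearIndependent_general δ hadd hleib a hrank m
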